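/- Every Nash equilibrium of an n-person constant-sum game is an optimin point: let I be a finite nonempty set of players with nonempty strategy sets S i and bounded utility functions u i, and suppose there is c ∈ ℝ with Σ_{i ∈ I} u i p = c for every profile p. If p̄ is a Nash equilibrium, then p̄ is an optimin point. -/

import Mathlib

/-- The deviation set `B₋ᵢ p`. -/
def Dev {I : Type*} [DecidableEq I] {S : I → Type*}
    (u : ∀ i : I, (∀ j, S j) → ℝ) (i : I) (p : ∀ j, S j) : Set (∀ j, S j) :=
  {q | q i = p i ∧ ∀ j, j ≠ i → (q j = p j ∨ u j (Function.update p j (q j)) > u j p)}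

/-- The value of a profile `p` to player `i`. -/
noncomputable def val {I : Type*} [DecidableEq I] {S : I → Type*}
    (u : ∀ i : I, (∀ j, S j) → ℝ) (i : I) (p : ∀ j, S j) : ℝ :=
  sInf (u i '' Dev u i p)

/-- `pbar` is an optimin point: its value vector is Pareto optimal. -/
def IsOptimin {I : Type*} [DecidableEq I] {S : I → Type*}
    (u : ∀ i : I, (∀ j, S j) → ℝ) (pbar : ∀ j, S j) : Prop :=
  ¬ ∃ p : ∀ j, S j, (∀ i, val u i pbar ≤ val u i p) ∧ ∃ j, val u j pbar < val u j p

/-!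
At a Nash equilibrium no player has a better response, so every deviation set is the
singleton `{p̄}` and each player's value is their utility. Since a profile belongs to its
own deviation sets, values never exceed utilities. A profile Pareto-improving the values
of `p̄` would therefore weakly raise every utility and strictly raise one, contradicting
the constant sum of utilities.
-/

section

variable {I : Type*} [DecidableEq I] {S : I → Type*} (u : ∀ i : I, (∀ j, S j) → ℝ)

def IsNashEquilibrium (p : ∀ j, S j) : Prop :=
  ∀ (i : I) (q : S i), u i (Function.update p i q) ≤ u i p

variable {u}

theorem self_mem_dev (i : I) (p : ∀ j, S j) : p ∈ Dev u i p :=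
  ⟨rfl, fun _ _ => Or.inl rfl⟩

theorem dev_eq_singleton_of_isNashEquilibrium {p : ∀ j, S j} (hp : IsNashEquilibrium u p)
    (i : I) : Dev u i p = {p} := by
  refine Set.eq_singleton_iff_unique_mem.2 ⟨self_mem_dev i p, fun q ⟨hqi, hq⟩ => ?_⟩
  funext j
  by_cases hji : j = i
  · subst hji
    exact hqi
  · exact (hq j hji).resolve_right (hp j (q j)).not_gt

theorem val_eq_of_isNashEquilibrium {p : ∀ j, S j} (hp : IsNashEquilibrium u p) (i : I) :
    val u i p = u i p := by
  rw [val, dev_eq_singleton_of_isNashEquilibrium hp, Set.image_singleton, csInf_singleton]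

theorem val_le_self {i : I} (hbdd : BddBelow (Set.range (u i))) (p : ∀ j, S j) :
    val u i p ≤ u i p :=
  csInf_le (hbdd.mono (Set.image_subset_range _ _)) ⟨p, self_mem_dev i p, rfl⟩

end

theorem nash_isOptimin_of_constantSum_general {I : Type*} [Fintype I] [DecidableEq I]
    {S : I → Type*}
    (u : ∀ i : I, (∀ j, S j) → ℝ) (hb : ∀ i, ∃ C : ℝ, ∀ p, |u i p| ≤ C)
    (c : ℝ) (hc : ∀ p : ∀ j, S j, ∑ i, u i p = c)
    (pbar : ∀ j, S j)
    (hnash : ∀ (i : I) (q : S i), u i (Function.update pbar i q) ≤ u i pbar) :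
    IsOptimin u pbar := by
  have hnash : IsNashEquilibrium u pbar := hnash
  have hbdd : ∀ i, BddBelow (Set.range (u i)) := fun i => by
    obtain ⟨C, hC⟩ := hb i
    exact ⟨-C, Set.forall_mem_range.2 fun p => neg_le_of_abs_le (hC p)⟩
  rintro ⟨p, hge, j, hlt⟩
  have hle : ∀ i, u i pbar ≤ u i p := fun i => by
    simpa only [val_eq_of_isNashEquilibrium hnash] using (hge i).trans (val_le_self (hbdd i) p)
  have heq : ∀ i ∈ Finset.univ, u i pbar = u i p :=
    (Finset.sum_eq_sum_iff_of_le fun i _ => hle i).1 (by rw [hc, hc])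
  rw [val_eq_of_isNashEquilibrium hnash, heq j (Finset.mem_univ j)] at hlt
  exact (val_le_self (hbdd j) p).not_gt hlt

/-- Every Nash equilibrium of an n-person constant-sum game is an optimin point. -/
theorem nash_isOptimin_of_constantSum {I : Type*} [Fintype I] [Nonempty I] [DecidableEq I]
    {S : I → Type*} [∀ i, Nonempty (S i)]
    (u : ∀ i : I, (∀ j, S j) → ℝ) (hb : ∀ i, ∃ C : ℝ, ∀ p, |u i p| ≤ C)
    (c : ℝ) (hc : ∀ p : ∀ j, S j, ∑ i, u i p = c)
    (pbar : ∀ j, S j)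
    (hnash : ∀ (i : I) (q : S i), u i (Function.update pbar i q) ≤ u i pbar) :
    IsOptimin u pbar :=
  nash_isOptimin_of_constantSum_general u hb c hc pbar hnash
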